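/- arXiv:1605.07905 — 6 statements merged into one kernel-verified Lean document; each statement's English description precedes it below -/
import Mathlib

section
/- The measure π_Ψ is an invariant probability distribution for the joint chain: π_Ψ(ψ) > 0 for all ψ ∈ 𝕏, ∑_{ψ∈𝕏} π_Ψ(ψ) = 1, and for every ψ' ∈ 𝕏 one has ∑_{ψ∈𝕏} π_Ψ(ψ)·P(ψ,ψ') = π_Ψ(ψ'). -/
open scoped BigOperators

noncomputable section

/-- The state space `𝕏 = {(0,q) : q ∈ ℕ} ∪ {(1,q) : q ≥ 1}` of the joint chain,
with the departure indicator encoded as a `Bool`. -/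
abbrev XS : Type := {p : Bool × ℕ // p.1 = true → 1 ≤ p.2}

/-- `ρ = λμ̄/(λ̄μ)`. -/
def rho (lam mu : ℝ) : ℝ := lam * (1 - mu) / ((1 - lam) * mu)

/-- The invariant distribution `π_Q` of the queue-length chain. -/
def piQ (lam mu : ℝ) (q : ℕ) : ℝ :=
  if q = 0 then ((1 - lam) * mu - lam * (1 - mu)) / mu
  else ((1 - lam) * mu - lam * (1 - mu)) / (mu * (1 - mu)) * rho lam mu ^ q

/-- The queue kernel `K` on ℕ. -/
def kerQ (lam mu : ℝ) (q q' : ℕ) : ℝ :=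
  if q = 0 then (if q' = 1 then lam else if q' = 0 then 1 - lam else 0)
  else if q' + 1 = q then (1 - lam) * mu
  else if q' = q + 1 then lam * (1 - mu)
  else if q' = q then 1 - lam * (1 - mu) - (1 - lam) * mu
  else 0

/-- The invariant distribution `π_Ψ` of the joint chain `(ỹ, q)`. -/
def piPsi (lam mu : ℝ) : Bool × ℕ → ℝ
  | (false, 0) => piQ lam mu 0
  | (false, q + 1) => (1 - mu) * piQ lam mu (q + 1)
  | (true, 0) => 0
  | (true, q + 1) => mu * piQ lam mu (q + 1)

/-- The transition kernel `P` of the joint chain: from `(ỹ,q)`, with arrival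
`x̃ = q' - q + ỹ ∈ {0,1}` (probability `λ` resp. `λ̄`), the next state is `(ỹ',q')`
with departure probability `1,0` at `q' = 0` and `μ̄, μ` at `q' ≥ 1`. -/
def kerP (lam mu : ℝ) (ψ ψ' : Bool × ℕ) : ℝ :=
  (if ((ψ'.2 : ℤ) - (ψ.2 : ℤ) + (if ψ.1 then 1 else 0)) = 1 then lam
   else if ((ψ'.2 : ℤ) - (ψ.2 : ℤ) + (if ψ.1 then 1 else 0)) = 0 then 1 - lam
   else 0) *
  (if ψ'.2 = 0 then (if ψ'.1 then 0 else 1) else (if ψ'.1 then mu else 1 - mu))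

/-- The `i`-step kernel `P^i` of the joint chain. -/
def kerIter (lam mu : ℝ) : ℕ → Bool × ℕ → Bool × ℕ → ℝ
  | 0, ψ, ψ' => if ψ = ψ' then 1 else 0
  | i + 1, ψ, ψ' => ∑' ψ'' : XS, kerIter lam mu i ψ ψ''.val * kerP lam mu ψ''.val ψ'

/-- The information-density function `f` on the joint state space. -/
def fInfo (lam mu : ℝ) : Bool × ℕ → ℝ
  | (false, 0) => Real.log (1 / (1 - lam))
  | (false, _ + 1) => Real.log ((1 - mu) / (1 - lam))
  | (true, 0) => 0
  | (true, _ + 1) => Real.log (mu / lam)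

/-- The binary entropy function. -/
def Hbin (p : ℝ) : ℝ := -(p * Real.log p) - (1 - p) * Real.log (1 - p)

/-- The capacity `C = H(λ) - (λ/μ) H(μ)` of the timing channel. -/
def Cap (lam mu : ℝ) : ℝ := Hbin lam - lam / mu * Hbin mu

/-- The constant `c_{M0}`. -/
def cM0 (lam mu : ℝ) : ℝ :=
  (1 - lam) / (1 - mu) *
    (mu * Real.log (mu / lam) + (1 - mu) * Real.log ((1 - mu) / (1 - lam)) - Cap lam mu)

/-- The constant `c_{M̃}`. -/
def cMt (lam mu : ℝ) : ℝ :=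
  cM0 lam mu / mu + (Cap lam mu - Real.log (mu / lam)) * piQ lam mu 0 / (1 - mu)

/-- The partial stationary sum `M(q,0) = ∑_{ψ' ∈ 𝕏, q' ≤ q} (C - f(ψ')) π_Ψ(ψ')`. -/
def M0 (lam mu : ℝ) (q : ℕ) : ℝ :=
  ∑' ψ : {p : Bool × ℕ // (p.1 = true → 1 ≤ p.2) ∧ p.2 ≤ q},
    (Cap lam mu - fInfo lam mu ψ.val) * piPsi lam mu ψ.val

/-- The partial stationary sum
`M(q,1) = ∑_{ψ' ∈ 𝕏 : q' < q, or q' = q and ỹ' = 1} (C - f(ψ')) π_Ψ(ψ')`. -/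
def M1 (lam mu : ℝ) (q : ℕ) : ℝ :=
  ∑' ψ : {p : Bool × ℕ // (p.1 = true → 1 ≤ p.2) ∧ (p.2 < q ∨ (p.2 = q ∧ p.1 = true))},
    (Cap lam mu - fInfo lam mu ψ.val) * piPsi lam mu ψ.val

/-- `r(ψ,i) = ∑_{ψ' ∈ 𝕏} (f(ψ') - C) π_Ψ(ψ') P^i(ψ',ψ)`. -/
def rfun (lam mu : ℝ) (i : ℕ) (ψ : Bool × ℕ) : ℝ :=
  ∑' ψ' : XS, (fInfo lam mu ψ'.val - Cap lam mu) * piPsi lam mu ψ'.val *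
    kerIter lam mu i ψ'.val ψ

/-- `R(ψ) = ∑_{i=0}^∞ r(ψ,i)`. -/
def Rfun (lam mu : ℝ) (ψ : Bool × ℕ) : ℝ := ∑' i : ℕ, rfun lam mu i ψ

/-- The stationary autocovariance
`Cov_i = ∑_{ψ,ψ' ∈ 𝕏} π_Ψ(ψ)(f(ψ)-C)(f(ψ')-C) P^i(ψ,ψ')`. -/
def covI (lam mu : ℝ) (i : ℕ) : ℝ :=
  ∑' p : XS × XS,
    piPsi lam mu p.1.val * (fInfo lam mu p.1.val - Cap lam mu) *
      (fInfo lam mu p.2.val - Cap lam mu) * kerIter lam mu i p.1.val p.2.val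

/-- The Lyapunov function `V(ỹ,q) = (q - ỹ)/(μ - λ)`. -/
def Vlya (lam mu : ℝ) (ψ : Bool × ℕ) : ℝ :=
  ((ψ.2 : ℝ) - (if ψ.1 then 1 else 0)) / (mu - lam)

/-- Stationary path probability `ℙ_n` for block length `n = m+1`:
`π_Ψ(ψ_0) ∏_{l=0}^{n-2} P(ψ_l, ψ_{l+1})`. -/
def pathP (lam mu : ℝ) (m : ℕ) (ψ : Fin (m + 1) → XS) : ℝ :=
  piPsi lam mu (ψ 0).val * ∏ l : Fin m, kerP lam mu (ψ l.castSucc).val (ψ l.succ).val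

/-- The partial sum `S_n = ∑_{i=0}^{n-1} f(ψ_i)` along a path, for `n = m+1`. -/
def Spath (lam mu : ℝ) (m : ℕ) (ψ : Fin (m + 1) → XS) : ℝ :=
  ∑ i : Fin (m + 1), fInfo lam mu (ψ i).val

/-- `Var_n = ∑_paths ℙ_n(path) (S_n - nC)^2`, for `n = m+1`. -/
def VarN (lam mu : ℝ) (m : ℕ) : ℝ :=
  ∑' ψ : Fin (m + 1) → XS,
    pathP lam mu m ψ * (Spath lam mu m ψ - ((m : ℝ) + 1) * Cap lam mu) ^ 2

/-- The explicit stationary variance `V₀` of `f`. -/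
def V0 (lam mu : ℝ) : ℝ :=
  Real.log (1 / (1 - lam)) ^ 2 * piQ lam mu 0 +
    Real.log (mu / lam) ^ 2 * mu * (1 - piQ lam mu 0) +
    Real.log ((1 - mu) / (1 - lam)) ^ 2 * (1 - mu) * (1 - piQ lam mu 0) -
    Cap lam mu ^ 2

/-- The explicit sum of autocovariances `Σ = ∑_{i=0}^∞ Cov_i`. -/
def SigSum (lam mu : ℝ) : ℝ :=
  Real.log (1 / (1 - lam)) *
      (-(cMt lam mu) * rho lam mu / (1 - rho lam mu) - cM0 lam mu * rho lam mu) +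
    Real.log (mu / lam) * cM0 lam mu * rho lam mu / (1 - rho lam mu) +
    Real.log ((1 - mu) / (1 - lam)) * (rho lam mu / (1 - rho lam mu)) *
      (cMt lam mu - rho lam mu * cM0 lam mu)

/-- The asymptotic standard deviation `σ = √(-V₀ + 2Σ)`. -/
def sigmaBE (lam mu : ℝ) : ℝ := Real.sqrt (-(V0 lam mu) + 2 * SigSum lam mu)

/-- The standard normal cumulative distribution function `Φ`. -/
def stdNormCDF (x : ℝ) : ℝ :=
  (Real.sqrt (2 * Real.pi))⁻¹ * ∫ t in Set.Iic x, Real.exp (-(t ^ 2) / 2)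

/-- Single-step departure probability `w(ỹ|q)` (queues that have gone negative,
which can only happen on a zero-probability trajectory, are treated like `q = 0`). -/
def wdep (mu : ℝ) (y : Bool) (q : ℤ) : ℝ :=
  if q ≤ 0 then (if y then 0 else 1) else (if y then mu else 1 - mu)

/-- The queue trajectory `q_i = q_{i-1} + x̃_i - ỹ_{i-1}`, with arrivals `x̃_i = x i`
for `i ≥ 1` and departures `ỹ_i = y i`. -/
def qtraj (q0 : ℕ) (x y : ℕ → Bool) : ℕ → ℤ
  | 0 => (q0 : ℤ)
  | i + 1 => qtraj q0 x y i + (if x (i + 1) then 1 else 0) - (if y i then 1 else 0)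

/-- The block channel `W(y|x) = ∏_{i=0}^{n-1} w(ỹ_i|q_i)` of the queue channel. -/
def Wchan (mu : ℝ) (n : ℕ) (q0 : ℕ) (x y : ℕ → Bool) : ℝ :=
  ∏ i ∈ Finset.range n, wdep mu (y i) (qtraj q0 x y i)

/-- The input distribution `P_X(q_0, x̃) = π_Q(q_0) ∏_{i=1}^{n-1} λ^{x̃_i} λ̄^{1-x̃_i}`. -/
def inpP (lam mu : ℝ) (n : ℕ) (q0 : ℕ) (x : ℕ → Bool) : ℝ :=
  piQ lam mu q0 * ∏ i ∈ Finset.range (n - 1), (if x (i + 1) then lam else 1 - lam)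

/-- Extend an arrival word `(x̃_1, …, x̃_m) ∈ {0,1}^m` to a function on ℕ. -/
def extX (m : ℕ) (xf : Fin m → Bool) : ℕ → Bool :=
  fun i => if h : 1 ≤ i ∧ i ≤ m then xf ⟨i - 1, by omega⟩ else false

/-- Extend an output word `(ỹ_0, …, ỹ_{n-1}) ∈ {0,1}^n` to a function on ℕ. -/
def extY (n : ℕ) (yf : Fin n → Bool) : ℕ → Bool :=
  fun i => if h : i < n then yf ⟨i, h⟩ else false

end

/-!
Both `π_Ψ(ỹ, q) = π_Q(q) w(ỹ | q)` and `P(ψ, (ỹ', q'))` carry the departure probability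
`w(ỹ' | q')` as a factor. Indexing `𝕏` by the queue length `m = q - ỹ` left after the
departure, the mass flowing into `(ỹ', q')` is `w(ỹ' | q') (λ D(q' - 1) + λ̄ D(q'))`, where
`D(m) = π_Ψ(0, m) + π_Ψ(1, m + 1)`. Since `ρ λ̄ μ = λ μ̄`, `D` is geometric,
`D(m) = (μ - λ)/(μ λ̄) ρ^m`, and this arrival convolution of `D` is exactly `π_Q`.
The total mass is `π_Q(0) + ∑_{q ≥ 1} π_Q(q) = (μ - λ)/μ + λ/μ = 1`.
-/

open Finset

section JointChain

variable {lam mu : ℝ}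

def arrProb (lam : ℝ) (k : ℤ) : ℝ :=
  if k = 1 then lam else if k = 0 then 1 - lam else 0

def depProb (mu : ℝ) (ψ : Bool × ℕ) : ℝ :=
  if ψ.2 = 0 then (if ψ.1 then 0 else 1) else (if ψ.1 then mu else 1 - mu)

lemma kerP_eq_arrProb_mul_depProb (ψ ψ' : Bool × ℕ) :
    kerP lam mu ψ ψ' = arrProb lam (ψ'.2 - ψ.2 + if ψ.1 then 1 else 0) * depProb mu ψ' :=
  rfl

lemma piPsi_eq_piQ_mul_depProb (ψ : Bool × ℕ) :
    piPsi lam mu ψ = piQ lam mu ψ.2 * depProb mu ψ := by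
  rcases ψ with ⟨_ | _, _ | q⟩ <;> simp [piPsi, depProb, mul_comm]

def stateEquivSum : ℕ ⊕ ℕ ≃ XS where
  toFun := Sum.elim (fun m => ⟨(false, m), by simp⟩) (fun m => ⟨(true, m + 1), by simp⟩)
  invFun ψ := if ψ.1.1 then .inr (ψ.1.2 - 1) else .inl ψ.1.2
  left_inv := by rintro (m | m) <;> simp
  right_inv := by
    rintro ⟨⟨_ | _, q⟩, hq⟩
    · rfl
    · have : 1 ≤ q := hq rfl
      simp only [↓reduceIte, Sum.elim_inr, Subtype.mk.injEq, Prod.mk.injEq, true_and]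
      omega

lemma hasSum_XS_of_false_of_true {M : Type*} [AddCommMonoid M] [TopologicalSpace M]
    [ContinuousAdd M] {f : XS → M} {a b : M}
    (hf : HasSum (fun m => f ⟨(false, m), by simp⟩) a)
    (ht : HasSum (fun m => f ⟨(true, m + 1), by simp⟩) b) : HasSum f (a + b) :=
  stateEquivSum.hasSum_iff.mp (hf.sum ht)

def arrConv (lam : ℝ) (u : ℕ → ℝ) : ℕ → ℝ
  | 0 => (1 - lam) * u 0
  | n + 1 => lam * u n + (1 - lam) * u (n + 1)

lemma arrConv_add (u v : ℕ → ℝ) (q : ℕ) :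
    arrConv lam u q + arrConv lam v q = arrConv lam (u + v) q := by
  cases q <;> simp only [arrConv, Pi.add_apply] <;> ring

lemma hasSum_mul_arrProb_sub (u : ℕ → ℝ) (q : ℕ) :
    HasSum (fun m => u m * arrProb lam (q - m)) (arrConv lam u q) := by
  cases q with
  | zero =>
    convert hasSum_single 0 fun m hm => ?_ using 1
    · simp [arrConv, arrProb, mul_comm]
    · simp only [arrProb]
      rw [if_neg (by omega), if_neg (by omega), mul_zero]
  | succ n =>
    have hsupp :
        ∀ m ∉ ({n, n + 1} : Finset ℕ), u m * arrProb lam ((n + 1 : ℕ) - m) = 0 := by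
      intro m hm
      simp only [mem_insert, mem_singleton, not_or] at hm
      simp only [arrProb]
      rw [if_neg (by omega), if_neg (by omega), mul_zero]
    have hs : HasSum _ _ := hasSum_sum_of_ne_finset_zero hsupp
    convert hs using 1
    simp [arrConv, arrProb, mul_comm]

lemma hasSum_mul_kerP (π : Bool × ℕ → ℝ) (ψ' : Bool × ℕ) :
    HasSum (fun ψ : XS => π ψ.1 * kerP lam mu ψ.1 ψ')
      (arrConv lam (fun m => π (false, m) + π (true, m + 1)) ψ'.2 * depProb mu ψ') := by
  have hf := (hasSum_mul_arrProb_sub (lam := lam) (fun m => π (false, m)) ψ'.2).mul_right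
    (depProb mu ψ')
  have ht := (hasSum_mul_arrProb_sub (lam := lam) (fun m => π (true, m + 1)) ψ'.2).mul_right
    (depProb mu ψ')
  rw [← Pi.add_def, ← arrConv_add, add_mul]
  refine hasSum_XS_of_false_of_true (hf.congr_fun fun m => ?_) (ht.congr_fun fun m => ?_)
  · simp [kerP_eq_arrProb_mul_depProb, mul_assoc]
  · simp [kerP_eq_arrProb_mul_depProb, mul_assoc, sub_add_eq_sub_sub]

end JointChain

section Stationary

variable {lam mu : ℝ}

lemma piQ_zero : piQ lam mu 0 = (mu - lam) / mu := by
  rw [piQ, if_pos rfl]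
  ring

lemma piQ_succ (q : ℕ) :
    piQ lam mu (q + 1) = (mu - lam) / (mu * (1 - mu)) * rho lam mu ^ (q + 1) := by
  rw [piQ, if_neg q.succ_ne_zero]
  ring

lemma rho_mul_one_sub_mul (hlam : lam ≠ 1) (hmu : mu ≠ 0) :
    rho lam mu * ((1 - lam) * mu) = lam * (1 - mu) := by
  rw [rho, div_mul_cancel₀]
  exact mul_ne_zero (sub_ne_zero.2 hlam.symm) hmu

lemma piPsi_false_add_piPsi_true (hlam : lam ≠ 1) (hmu : mu ≠ 0) (hmu' : mu ≠ 1) (m : ℕ) :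
    piPsi lam mu (false, m) + piPsi lam mu (true, m + 1) =
      (mu - lam) / (mu * (1 - lam)) * rho lam mu ^ m := by
  have hρ := rho_mul_one_sub_mul hlam hmu
  cases m with
  | zero =>
    simp only [piPsi, piQ_zero, piQ_succ, zero_add, pow_one, pow_zero]
    field_simp
    linear_combination (mu - lam) * hρ
  | succ m =>
    simp only [piPsi, piQ_succ, pow_succ _ (m + 1)]
    field_simp
    linear_combination (mu - lam) * rho lam mu ^ (m + 1) * hρ

lemma arrConv_geometric_eq_piQ (hlam : lam ≠ 1) (hmu : mu ≠ 0) (hmu' : mu ≠ 1) (q : ℕ) :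
    arrConv lam (fun m => (mu - lam) / (mu * (1 - lam)) * rho lam mu ^ m) q = piQ lam mu q := by
  have hρ := rho_mul_one_sub_mul hlam hmu
  cases q with
  | zero =>
    simp only [arrConv, piQ_zero, pow_zero]
    field_simp
  | succ n =>
    simp only [arrConv, piQ_succ, pow_succ]
    field_simp
    linear_combination -(mu - lam) * rho lam mu ^ n * hρ

lemma rho_pos (h0 : 0 < lam) (h1 : lam < mu) (h2 : mu < 1) : 0 < rho lam mu := by
  unfold rho
  have : 0 < mu := h0.trans h1
  have : 0 < 1 - mu := sub_pos.2 h2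
  have : 0 < 1 - lam := sub_pos.2 (h1.trans h2)
  positivity

lemma rho_lt_one (h0 : 0 < lam) (h1 : lam < mu) (h2 : mu < 1) : rho lam mu < 1 := by
  rw [rho, div_lt_one (mul_pos (sub_pos.2 (h1.trans h2)) (h0.trans h1))]
  nlinarith

lemma hasSum_piQ_succ (h0 : 0 < lam) (h1 : lam < mu) (h2 : mu < 1) :
    HasSum (fun q => piQ lam mu (q + 1)) (lam / mu) := by
  have hgeom := (hasSum_geometric_of_lt_one (rho_pos h0 h1 h2).le (rho_lt_one h0 h1 h2)).mul_left
    ((mu - lam) / (mu * (1 - mu)) * rho lam mu)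
  have hval : (mu - lam) / (mu * (1 - mu)) * rho lam mu * (1 - rho lam mu)⁻¹ = lam / mu := by
    have hρ := rho_mul_one_sub_mul (h1.trans h2).ne (h0.trans h1).ne'
    have hρ1 : 1 - rho lam mu ≠ 0 := (sub_pos.2 (rho_lt_one h0 h1 h2)).ne'
    field_simp
    rw [div_eq_div_iff (mul_ne_zero (h0.trans h1).ne' (sub_pos.2 h2).ne') (h0.trans h1).ne']
    linear_combination mu * hρ
  rw [← hval]
  exact hgeom.congr_fun fun q => by rw [piQ_succ, pow_succ']; ring

lemma piQ_pos (h0 : 0 < lam) (h1 : lam < mu) (h2 : mu < 1) (q : ℕ) : 0 < piQ lam mu q := by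
  have hmu : 0 < mu := h0.trans h1
  cases q with
  | zero => rw [piQ_zero]; exact div_pos (sub_pos.2 h1) hmu
  | succ q =>
    rw [piQ_succ]
    exact mul_pos (div_pos (sub_pos.2 h1) (mul_pos hmu (sub_pos.2 h2)))
      (pow_pos (rho_pos h0 h1 h2) _)

lemma depProb_pos (hmu : 0 < mu) (hmu' : mu < 1) (ψ : XS) : 0 < depProb mu ψ.1 := by
  rcases ψ with ⟨⟨_ | _, _ | q⟩, hq⟩
  · simp [depProb]
  · simpa [depProb] using hmu'
  · exact absurd (hq rfl) (by omega)
  · simpa [depProb] using hmu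

lemma piPsi_pos (h0 : 0 < lam) (h1 : lam < mu) (h2 : mu < 1) (ψ : XS) :
    0 < piPsi lam mu ψ.1 := by
  rw [piPsi_eq_piQ_mul_depProb]
  exact mul_pos (piQ_pos h0 h1 h2 _) (depProb_pos (h0.trans h1) h2 ψ)

lemma hasSum_piPsi (h0 : 0 < lam) (h1 : lam < mu) (h2 : mu < 1) :
    HasSum (fun ψ : XS => piPsi lam mu ψ.1) 1 := by
  have hs := hasSum_piQ_succ h0 h1 h2
  have hfalse :
      HasSum (fun m => piPsi lam mu (false, m)) (piQ lam mu 0 + (1 - mu) * (lam / mu)) :=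
    (hs.mul_left (1 - mu)).zero_add
  have htrue : HasSum (fun m => piPsi lam mu (true, m + 1)) (mu * (lam / mu)) := hs.mul_left mu
  have hsum := hasSum_XS_of_false_of_true (f := fun ψ : XS => piPsi lam mu ψ.1) hfalse htrue
  have hmu : mu ≠ 0 := (h0.trans h1).ne'
  rwa [piQ_zero, show (mu - lam) / mu + (1 - mu) * (lam / mu) + mu * (lam / mu) = 1 by
    field_simp; ring] at hsum

lemma hasSum_piPsi_mul_kerP (hlam : lam ≠ 1) (hmu : mu ≠ 0) (hmu' : mu ≠ 1)
    (ψ' : Bool × ℕ) :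
    HasSum (fun ψ : XS => piPsi lam mu ψ.1 * kerP lam mu ψ.1 ψ') (piPsi lam mu ψ') := by
  have h := hasSum_mul_kerP (lam := lam) (mu := mu) (piPsi lam mu) ψ'
  rwa [funext (piPsi_false_add_piPsi_true hlam hmu hmu'), arrConv_geometric_eq_piQ hlam hmu hmu',
    ← piPsi_eq_piQ_mul_depProb] at h

end Stationary

/-- `π_Ψ` is an invariant probability distribution for the joint chain:
it is positive on `𝕏`, sums to one over `𝕏`, and `∑_{ψ∈𝕏} π_Ψ(ψ) P(ψ,ψ') = π_Ψ(ψ')`. -/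
theorem piPsi_invariant_prob (lam mu : ℝ) (h0 : 0 < lam) (h1 : lam < mu) (h2 : mu < 1) :
    (∀ ψ : XS, 0 < piPsi lam mu ψ.val) ∧
    (∑' ψ : XS, piPsi lam mu ψ.val) = 1 ∧
    (∀ ψ' : XS,
      (∑' ψ : XS, piPsi lam mu ψ.val * kerP lam mu ψ.val ψ'.val) = piPsi lam mu ψ'.val) :=
  ⟨piPsi_pos h0 h1 h2, (hasSum_piPsi h0 h1 h2).tsum_eq, fun ψ' =>
    (hasSum_piPsi_mul_kerP (h1.trans h2).ne (h0.trans h1).ne' h2.ne ψ'.1).tsum_eq⟩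
end

section
/- (Burke's theorem, discrete time.) If the initial queue length is distributed according to π_Q and the arrivals are i.i.d. Bernoulli(λ), then the departure sequence is i.i.d. Bernoulli(λ): for every n ≥ 1 and every y = (ỹ_0,…,ỹ_{n−1}) ∈ {0,1}^n, ∑_{x ∈ ℕ×{0,1}^{n−1}} P_X(x)·W(y|x) = ∏_{i=0}^{n−1} λ^{ỹ_i} λ̄^{1−ỹ_i}. -/
open scoped BigOperators

/-!
Conditioning on the initial queue length `q₀`, the left-hand side is `∑ π_Q(q) D_n(q, y)`, where
`D_n(q, y)` is the probability of the departures `y` from queue length `q`; it obeys a one-step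
recursion in `n`. Detailed balance `λ w(0|q) π_Q(q) = λ̄ μ π_Q(q+1)` shows that, for `q₀ ~ π_Q`,
the first departure `ỹ₀` and the next queue length `q₁` are independent with laws Bernoulli(λ)
and `π_Q` again, so induction on `n` peels off one Bernoulli(λ) factor per step.
-/

theorem hasSum_prod_of_nonneg {α β : Type*} [Fintype β] {f : α × β → ℝ} (hf : 0 ≤ f) {s : ℝ}
    (h : HasSum (fun a => ∑ b, f (a, b)) s) : HasSum f s := by
  have hsum : Summable f := (summable_prod_of_nonneg hf).mpr
    ⟨fun _ => .of_finite, by simpa only [tsum_fintype] using h.summable⟩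
  convert hsum.hasSum
  rw [hsum.tsum_prod' fun _ => .of_finite, ← h.tsum_eq]
  simp only [tsum_fintype]

namespace Burke

variable {lam mu : ℝ}

def bernoulliWeight (lam : ℝ) (b : Bool) : ℝ := if b then lam else 1 - lam

@[simp] lemma bernoulliWeight_true : bernoulliWeight lam true = lam := rfl

@[simp] lemma bernoulliWeight_false : bernoulliWeight lam false = 1 - lam := rfl

lemma bernoulliWeight_nonneg (hl0 : 0 ≤ lam) (hl1 : lam ≤ 1) (b : Bool) :
    0 ≤ bernoulliWeight lam b := by
  cases b <;> simp <;> linarith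

lemma piQ_zero : piQ lam mu 0 = (mu - lam) / mu := by
  rw [piQ, if_pos rfl]; ring_nf

lemma piQ_succ (q : ℕ) :
    piQ lam mu (q + 1) = (mu - lam) / (mu * (1 - mu)) * rho lam mu ^ (q + 1) := by
  rw [piQ, if_neg q.succ_ne_zero]; ring_nf

lemma rho_nonneg (hl0 : 0 ≤ lam) (hl1 : lam ≤ 1) (hμ0 : 0 ≤ mu) (hμ1 : mu ≤ 1) :
    0 ≤ rho lam mu :=
  div_nonneg (mul_nonneg hl0 (by linarith)) (mul_nonneg (by linarith) hμ0)

lemma one_sub_rho (hl1 : lam < 1) (hμ0 : 0 < mu) :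
    1 - rho lam mu = (mu - lam) / ((1 - lam) * mu) := by
  have : 1 - lam ≠ 0 := by linarith
  rw [rho]; field_simp; ring

lemma piQ_nonneg (hl0 : 0 ≤ lam) (hlμ : lam < mu) (hμ1 : mu < 1) (q : ℕ) :
    0 ≤ piQ lam mu q := by
  have hρ := rho_nonneg hl0 (by linarith) (by linarith) hμ1.le
  cases q with
  | zero => rw [piQ_zero]; exact div_nonneg (by linarith) (by linarith)
  | succ q =>
    rw [piQ_succ]
    exact mul_nonneg (div_nonneg (by linarith) (mul_nonneg (by linarith) (by linarith)))
      (pow_nonneg hρ _)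

theorem hasSum_piQ (hl0 : 0 ≤ lam) (hlμ : lam < mu) (hμ1 : mu < 1) :
    HasSum (piQ lam mu) 1 := by
  have hμ0 : 0 < mu := hl0.trans_lt hlμ
  have hl1 : lam < 1 := hlμ.trans hμ1
  have hρ1 : rho lam mu < 1 := by
    have := one_sub_rho hl1 hμ0
    have : 0 < (mu - lam) / ((1 - lam) * mu) := div_pos (by linarith) (by nlinarith)
    linarith
  have hgeom := (hasSum_geometric_of_lt_one
    (rho_nonneg hl0 hl1.le hμ0.le hμ1.le) hρ1).mul_left ((mu - lam) / (mu * (1 - mu)) * rho lam mu)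
  have hval : (mu - lam) / (mu * (1 - mu)) * rho lam mu * (1 - rho lam mu)⁻¹ = lam / mu := by
    have : 1 - mu ≠ 0 := by linarith
    have : mu - lam ≠ 0 := by linarith
    have : 1 - lam ≠ 0 := by linarith
    rw [one_sub_rho hl1 hμ0, rho]; field_simp
  have htail : HasSum (fun q => piQ lam mu (q + 1)) (lam / mu) := by
    have hterm : (fun q => piQ lam mu (q + 1)) =
        fun q => (mu - lam) / (mu * (1 - mu)) * rho lam mu * rho lam mu ^ q := by
      ext q; rw [piQ_succ, pow_succ']; ring
    rw [hterm, ← hval]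
    exact hgeom
  convert htail.zero_add using 1
  rw [piQ_zero]; field_simp; ring

/-- The flux `q → q + 1` (an arrival and no departure) equals the flux `q + 1 → q`
(a departure and no arrival). -/
theorem detailed_balance (hl1 : lam < 1) (hμ0 : 0 < mu) (hμ1 : mu < 1) (q : ℕ) :
    lam * wdep mu false q * piQ lam mu q = (1 - lam) * mu * piQ lam mu (q + 1) := by
  have : 1 - mu ≠ 0 := by linarith
  have : 1 - lam ≠ 0 := by linarith
  cases q with
  | zero => simp [wdep, piQ_zero, piQ_succ, rho]; field_simp
  | succ q =>
    have hρ : (1 - lam) * mu * rho lam mu = lam * (1 - mu) := by rw [rho]; field_simp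
    have hw : wdep mu false ((q + 1 : ℕ) : ℤ) = 1 - mu := by simp [wdep]
    rw [hw, piQ_succ, piQ_succ, pow_succ _ (q + 1)]
    linear_combination (-(mu - lam) / (mu * (1 - mu)) * rho lam mu ^ (q + 1)) * hρ

@[simp] lemma wdep_true_zero : wdep mu true 0 = 0 := by simp [wdep]

@[simp] lemma wdep_natCast_add_one (b : Bool) (q : ℕ) :
    wdep mu b ((q : ℤ) + 1) = bernoulliWeight mu b := by
  rw [wdep, if_neg (by omega)]; rfl

lemma wdep_false_add_wdep_true (q : ℤ) : wdep mu false q + wdep mu true q = 1 := by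
  unfold wdep; by_cases hq : q ≤ 0 <;> simp [hq]

/-- One step of the queue is stationary and its departure is independent of the next queue
length: against any test function `G` of the next state, `(departure b, next state)` has
law `Bernoulli(λ) ⊗ π_Q`. -/
theorem hasSum_piQ_mul_step (hl1 : lam < 1) (hμ0 : 0 < mu) (hμ1 : mu < 1) (b : Bool)
    {G : ℕ → ℝ} {S : ℝ} (hG : HasSum (fun q => piQ lam mu q * G q) S)
    (hv : Summable fun q => piQ lam mu q * wdep mu true q * G q) :
    HasSum (fun q => piQ lam mu q * (wdep mu b q *
        ∑ c : Bool, bernoulliWeight lam c * G (q + c.toNat - b.toNat)))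
      (bernoulliWeight lam b * S) := by
  set v : ℕ → ℝ := fun q => piQ lam mu q * wdep mu true q * G q
  have hv_shift : HasSum (fun q => v (q + 1)) (∑' q, v q) := by
    simpa [v] using (hasSum_nat_add_iff' 1).mpr hv.hasSum
  -- the flux `v` telescopes away, leaving `∑ π_Q G`
  have hu : HasSum (fun q => piQ lam mu q * G q - v q + v (q + 1)) S := by
    simpa using (hG.sub hv.hasSum).add hv_shift
  have hdb (q : ℕ) : lam * (piQ lam mu q * G q - v q) =
      (1 - lam) * mu * piQ lam mu (q + 1) * G q := by
    have := wdep_false_add_wdep_true (mu := mu) q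
    linear_combination G q * detailed_balance hl1 hμ0 hμ1 q - lam * piQ lam mu q * G q * this
  cases b with
  | false =>
    have hterm : (fun q => piQ lam mu q * (wdep mu false q *
        ∑ c : Bool, bernoulliWeight lam c * G (q + c.toNat - false.toNat))) =
        fun q => (1 - lam) * (piQ lam mu q * G q - v q + v (q + 1)) := by
      ext q
      have := wdep_false_add_wdep_true (mu := mu) q
      simp [v]
      linear_combination G (q + 1) * detailed_balance hl1 hμ0 hμ1 q
        + (1 - lam) * piQ lam mu q * G q * this
    rw [hterm]
    exact hu.mul_left (1 - lam)
  | true =>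
    have hterm : (fun q => piQ lam mu (q + 1) * (wdep mu true ((q + 1 : ℕ) : ℤ) *
        ∑ c : Bool, bernoulliWeight lam c * G (q + 1 + c.toNat - true.toNat))) =
        fun q => lam * (piQ lam mu q * G q - v q + v (q + 1)) := by
      ext q
      simp [v]
      linear_combination -hdb q
    have h := hu.mul_left lam
    rw [← hterm] at h
    refine (hasSum_nat_add_iff' 1).mp ?_
    simpa using h

lemma wdep_mem_Icc (hμ0 : 0 ≤ mu) (hμ1 : mu ≤ 1) (b : Bool) (q : ℤ) :
    wdep mu b q ∈ Set.Icc 0 1 := by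
  unfold wdep; split_ifs <;> constructor <;> linarith

/-- `departureProb lam mu n q y` is the probability that a queue started at length `q` with
Bernoulli(λ) arrivals emits the departures `y 0, …, y (n - 1)`. The truncated subtraction
`q + c - y 0` is harmless: it only truncates when `q = 0` and `y 0`, where `wdep` vanishes. -/
def departureProb (lam mu : ℝ) : ℕ → ℕ → (ℕ → Bool) → ℝ
  | 0, _, _ => 1
  | n + 1, q, y => wdep mu (y 0) q * ∑ c : Bool, bernoulliWeight lam c *
      departureProb lam mu n (q + c.toNat - (y 0).toNat) (fun j => y (j + 1))

lemma departureProb_mem_Icc (hl0 : 0 ≤ lam) (hl1 : lam ≤ 1) (hμ0 : 0 ≤ mu) (hμ1 : mu ≤ 1)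
    (n q : ℕ) (y : ℕ → Bool) : departureProb lam mu n q y ∈ Set.Icc 0 1 := by
  induction n generalizing q y with
  | zero => simp [departureProb]
  | succ n ih =>
    have hw := wdep_mem_Icc hμ0 hμ1 (y 0) q
    have hsum : (∑ c : Bool, bernoulliWeight lam c *
        departureProb lam mu n (q + c.toNat - (y 0).toNat) (fun j => y (j + 1))) ∈ Set.Icc 0 1 := by
      have h1 := ih (q + 1 - (y 0).toNat) (fun j => y (j + 1))
      have h0 := ih (q - (y 0).toNat) (fun j => y (j + 1))
      simp only [Fintype.sum_bool, bernoulliWeight_true, bernoulliWeight_false, Bool.toNat_true,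
        Bool.toNat_false, add_zero] at h0 h1 ⊢
      constructor <;> nlinarith [h0.1, h0.2, h1.1, h1.2]
    exact ⟨mul_nonneg hw.1 hsum.1, mul_le_one₀ hw.2 hsum.1 hsum.2⟩

theorem hasSum_piQ_mul_departureProb (hl0 : 0 ≤ lam) (hlμ : lam < mu) (hμ1 : mu < 1)
    (n : ℕ) (y : ℕ → Bool) :
    HasSum (fun q => piQ lam mu q * departureProb lam mu n q y)
      (∏ i ∈ Finset.range n, bernoulliWeight lam (y i)) := by
  have hμ0 : 0 < mu := hl0.trans_lt hlμ
  have hl1 : lam < 1 := hlμ.trans hμ1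
  induction n generalizing y with
  | zero => simpa [departureProb] using hasSum_piQ hl0 hlμ hμ1
  | succ n ih =>
    have hv : Summable fun q =>
        piQ lam mu q * wdep mu true q * departureProb lam mu n q (fun j => y (j + 1)) := by
      refine (hasSum_piQ hl0 hlμ hμ1).summable.of_norm_bounded fun q => ?_
      have hw := wdep_mem_Icc hμ0.le hμ1.le true q
      have hD := departureProb_mem_Icc hl0 hl1.le hμ0.le hμ1.le n q (fun j => y (j + 1))
      have hπ := piQ_nonneg hl0 hlμ hμ1 q
      rw [Real.norm_of_nonneg (mul_nonneg (mul_nonneg hπ hw.1) hD.1), mul_assoc]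
      exact mul_le_of_le_one_right hπ (mul_le_one₀ hw.2 hD.1 hD.2)
    rw [Finset.prod_range_succ', mul_comm]
    simpa only [departureProb] using hasSum_piQ_mul_step hl1 hμ0 hμ1 (y 0) (ih _) hv

lemma qtraj_succ_eq {q0 q1 : ℕ} {x x' y : ℕ → Bool} (hx : ∀ j, 1 ≤ j → x' j = x (j + 1))
    (hq : (q1 : ℤ) = q0 + (if x 1 then 1 else 0) - (if y 0 then 1 else 0)) (i : ℕ) :
    qtraj q1 x' (fun j => y (j + 1)) i = qtraj q0 x y (i + 1) := by
  induction i with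
  | zero => exact hq
  | succ i ih => simp only [qtraj, ih, hx (i + 1) (by omega)]

lemma Wchan_succ {x x' : ℕ → Bool} (hx : ∀ j, 1 ≤ j → x' j = x (j + 1)) (n q0 : ℕ)
    (y : ℕ → Bool) :
    Wchan mu (n + 1) q0 x y =
      wdep mu (y 0) q0 * Wchan mu n (q0 + (x 1).toNat - (y 0).toNat) x' (fun j => y (j + 1)) := by
  rw [Wchan, Finset.prod_range_succ', mul_comm]
  by_cases hblocked : q0 = 0 ∧ y 0 = true
  · obtain ⟨rfl, hy⟩ := hblocked
    simp [qtraj, hy]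
  · refine congrArg _ (Finset.prod_congr rfl fun i _ => ?_)
    rw [qtraj_succ_eq hx]
    cases hx1 : x 1 <;> cases hy0 : y 0 <;> simp_all
    omega

lemma extX_add_one (m : ℕ) (xf : Fin m → Bool) (i : Fin m) : extX m xf (i + 1) = xf i := by
  simp [extX, i.isLt]

lemma extX_cons_one (m : ℕ) (c : Bool) (rest : Fin m → Bool) :
    extX (m + 1) (Fin.cons c rest) 1 = c := by
  simpa using extX_add_one (m + 1) (Fin.cons c rest) 0

lemma extX_cons_add_one (m : ℕ) (c : Bool) (rest : Fin m → Bool) (j : ℕ) (hj : 1 ≤ j) :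
    extX m rest j = extX (m + 1) (Fin.cons c rest) (j + 1) := by
  obtain ⟨i, rfl⟩ : ∃ i, j = i + 1 := ⟨j - 1, by omega⟩
  by_cases hi : i < m
  · rw [extX_add_one m rest ⟨i, hi⟩, ← Fin.cons_succ (α := fun _ => Bool) c rest]
    exact (extX_add_one (m + 1) _ (Fin.succ ⟨i, hi⟩)).symm
  · simp [extX, hi]

theorem sum_prod_bernoulliWeight_mul_Wchan (m q : ℕ) (y : ℕ → Bool) :
    ∑ xf : Fin m → Bool, (∏ i, bernoulliWeight lam (xf i)) * Wchan mu (m + 1) q (extX m xf) y =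
      departureProb lam mu (m + 1) q y := by
  induction m generalizing q y with
  | zero => simp [Wchan, departureProb, qtraj]
  | succ m ih =>
    rw [← (Fin.consEquiv fun _ => Bool).sum_comp, Fintype.sum_prod_type, departureProb,
      Finset.mul_sum]
    refine Finset.sum_congr rfl fun c _ => ?_
    rw [← ih, Finset.mul_sum, Finset.mul_sum]
    refine Finset.sum_congr rfl fun rest _ => ?_
    rw [show (Fin.consEquiv fun _ => Bool) (c, rest) = Fin.cons c rest from rfl,
      Fin.prod_univ_succ, Wchan_succ (extX_cons_add_one m c rest), extX_cons_one]
    simp only [Fin.cons_zero, Fin.cons_succ]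
    ring

lemma inpP_extX (m q : ℕ) (xf : Fin m → Bool) :
    inpP lam mu (m + 1) q (extX m xf) = piQ lam mu q * ∏ i, bernoulliWeight lam (xf i) := by
  rw [inpP, Nat.add_sub_cancel, ← Fin.prod_univ_eq_prod_range
    (fun i => if extX m xf (i + 1) then lam else 1 - lam)]
  simp only [extX_add_one, bernoulliWeight]

theorem sum_inpP_mul_Wchan (n q : ℕ) (y : ℕ → Bool) :
    ∑ xf : Fin (n - 1) → Bool,
        inpP lam mu n q (extX (n - 1) xf) * Wchan mu n q (extX (n - 1) xf) y =
      piQ lam mu q * departureProb lam mu n q y := by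
  cases n with
  | zero =>
    show ∑ xf : Fin 0 → Bool, inpP lam mu 0 q (extX 0 xf) * Wchan mu 0 q (extX 0 xf) y = _
    simp [inpP, Wchan, departureProb]
  | succ m =>
    show ∑ xf : Fin m → Bool,
      inpP lam mu (m + 1) q (extX m xf) * Wchan mu (m + 1) q (extX m xf) y = _
    simp only [inpP_extX, mul_assoc, ← Finset.mul_sum, sum_prod_bernoulliWeight_mul_Wchan]

lemma inpP_nonneg (hl0 : 0 ≤ lam) (hlμ : lam < mu) (hμ1 : mu < 1) (n q : ℕ) (x : ℕ → Bool) :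
    0 ≤ inpP lam mu n q x :=
  mul_nonneg (piQ_nonneg hl0 hlμ hμ1 q) (Finset.prod_nonneg fun i _ =>
    bernoulliWeight_nonneg hl0 (hlμ.trans hμ1).le (x (i + 1)))

lemma Wchan_nonneg (hμ0 : 0 ≤ mu) (hμ1 : mu ≤ 1) (n q : ℕ) (x y : ℕ → Bool) :
    0 ≤ Wchan mu n q x y :=
  Finset.prod_nonneg fun _ _ => (wdep_mem_Icc hμ0 hμ1 _ _).1

end Burke

theorem burke_general (lam mu : ℝ) (h0 : 0 < lam) (h1 : lam < mu) (h2 : mu < 1)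
    (n : ℕ) (y : ℕ → Bool) :
    (∑' x : ℕ × (Fin (n - 1) → Bool),
        inpP lam mu n x.1 (extX (n - 1) x.2) * Wchan mu n x.1 (extX (n - 1) x.2) y) =
      ∏ i ∈ Finset.range n, (if y i then lam else 1 - lam) := by
  refine (hasSum_prod_of_nonneg (fun x => mul_nonneg (Burke.inpP_nonneg h0.le h1 h2 ..)
    (Burke.Wchan_nonneg (h0.trans h1).le h2.le ..)) ?_).tsum_eq
  simpa only [Burke.sum_inpP_mul_Wchan, Burke.bernoulliWeight]
    using Burke.hasSum_piQ_mul_departureProb h0.le h1 h2 n y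

/-- Burke's theorem, discrete time: with the initial queue length
distributed as `π_Q` and i.i.d. Bernoulli(λ) arrivals, the departures are i.i.d.
Bernoulli(λ): for every `n ≥ 1` and output word `y`,
`∑_x P_X(x) W(y|x) = ∏_{i=0}^{n-1} λ^{ỹ_i} λ̄^{1-ỹ_i}`. -/
theorem burke (lam mu : ℝ) (h0 : 0 < lam) (h1 : lam < mu) (h2 : mu < 1)
    (n : ℕ) (hn : 1 ≤ n) (y : ℕ → Bool) :
    (∑' x : ℕ × (Fin (n - 1) → Bool),
        inpP lam mu n x.1 (extX (n - 1) x.2) * Wchan mu n x.1 (extX (n - 1) x.2) y) =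
      ∏ i ∈ Finset.range n, (if y i then lam else 1 - lam) :=
  burke_general lam mu h0 h1 h2 n y
end

section
/- (Feinstein's lemma.) For every θ ∈ ℝ and every 0 < ε < 1, the maximal size N(ε) of an ε-code satisfies N(ε) ≥ e^{θ}·(ε − P[i(X,Y) ≤ θ]), where P[i(X,Y) ≤ θ] = ∑_{(x,y) : i(x,y) ≤ θ} P_X(x)·W(y|x). -/
open scoped BigOperators

/-!
Call `y` typical for `x` when `W(y|x) > 0` and `i(x,y) > θ`; then `e^θ P_Y(y) ≤ W(y|x)`.
Greedily add a codeword `x` with decoding set `{y typical for x} \ D`, where `D` is the union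
of the decoding sets chosen so far, as long as this set has `W(·|x)`-mass `> 1 - ε`.
Either this yields `⌈e^θ ε⌉` codewords, or it stops at a code of size `N` with
`W({y typical for x} \ D | x) ≤ 1 - ε` for all `x`. Averaging over `P_X` then gives
`1 - P[i(X,Y) ≤ θ] ≤ P_Y(D) + 1 - ε`, while `e^θ P_Y(D) ≤ N` because every decoding set
consists of outputs typical for its codeword.
-/

open Set Function Real

lemma Real.exp_mul_le_of_lt_log_div {w q θ : ℝ} (hw : 0 < w) (hq : 0 ≤ q)
    (h : θ < log (w / q)) : exp θ * q ≤ w := by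
  rcases hq.eq_or_lt with rfl | hq
  · simpa using hw.le
  · exact (le_div_iff₀ hq).1 ((lt_log_iff_exp_lt (div_pos hw hq)).1 h).le

section Summation

variable {α β : Type*}

lemma HasSum.tsum_subtype_le {f : α → ℝ} {a : ℝ} (hf : HasSum f a) (hf0 : 0 ≤ f) (s : Set α) :
    ∑' x : s, f x ≤ a :=
  hf.tsum_eq ▸ hf.summable.tsum_subtype_le f s hf0

lemma Summable.tsum_subtype_mono {f : α → ℝ} (hf : Summable f) (hf0 : 0 ≤ f) {s t : Set α}
    (hst : s ⊆ t) : ∑' a : s, f a ≤ ∑' a : t, f a := by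
  rw [tsum_subtype, tsum_subtype]
  exact (hf.indicator s).tsum_le_tsum (indicator_le_indicator_of_subset hst hf0) (hf.indicator t)

lemma Summable.tsum_subtype_le_add_tsum_subtype_diff {f : α → ℝ} (hf : Summable f) (hf0 : 0 ≤ f)
    (s t : Set α) : ∑' a : s, f a ≤ ∑' a : t, f a + ∑' a : ↥(s \ t), f a := by
  rw [← (hf.subtype t).tsum_union_disjoint disjoint_sdiff_right (hf.subtype _), union_sdiff_self]
  exact hf.tsum_subtype_mono hf0 subset_union_right

lemma Summable.tsum_subtype_prod {f : α × β → ℝ} (hf : Summable f) (s : Set (α × β)) :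
    ∑' p : s, f p = ∑' a, ∑' b : {b | (a, b) ∈ s}, f (a, b) := by
  rw [tsum_subtype, (hf.indicator s).tsum_prod]
  congr 1 with a
  rw [tsum_subtype {b | (a, b) ∈ s} fun b => f (a, b)]
  rfl

lemma Summable.tsum_tsum_subtype_comm {f : α → β → ℝ} (hf : Summable (uncurry f)) (t : Set β) :
    ∑' a, ∑' b : t, f a b = ∑' b : t, ∑' a, f a b := by
  have hft : Summable (uncurry fun a b => t.indicator (f a) b) :=
    (hf.indicator (Prod.snd ⁻¹' t)).congr fun ⟨a, b⟩ => by
      by_cases hb : b ∈ t <;> simp [hb]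
  simp_rw [tsum_subtype]
  rw [← hft.tsum_comm, tsum_subtype t fun b => ∑' a, f a b]
  congr 1 with b
  by_cases hb : b ∈ t <;> simp [hb]

end Summation

section Code

variable {X Y : Type*} {W : X → Y → ℝ} {ε : ℝ}

variable (W ε) in
structure IsCode {N : ℕ} (cw : Fin N → X) (D : Fin N → Set Y) : Prop where
  disjoint : Pairwise (Disjoint on D)
  lt_tsum : ∀ i, 1 - ε < ∑' y : D i, W (cw i) y

lemma IsCode.snoc {N : ℕ} {cw : Fin N → X} {D : Fin N → Set Y} (h : IsCode W ε cw D)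
    {x : X} {S : Set Y} (hS : ∀ i, Disjoint (D i) S) (hx : 1 - ε < ∑' y : S, W x y) :
    IsCode W ε (Fin.snoc cw x : Fin (N + 1) → X) (Fin.snoc D S : Fin (N + 1) → Set Y) where
  disjoint i j hij := by
    induction i using Fin.lastCases <;> induction j using Fin.lastCases
    · exact absurd rfl hij
    · simpa [onFun] using (hS _).symm
    · simpa [onFun] using hS _
    · simpa [onFun] using h.disjoint (Fin.castSucc_injective _ |>.ne_iff.1 hij)
  lt_tsum i := by
    induction i using Fin.lastCases
    · rw [Fin.snoc_last, Fin.snoc_last]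
      exact hx
    · rw [Fin.snoc_castSucc, Fin.snoc_castSucc]
      exact h.lt_tsum _

variable (W ε) in
lemma exists_isCode_le_or_saturated (A : X → Set Y) (n : ℕ) :
    ∃ (N : ℕ) (cw : Fin N → X) (D : Fin N → Set Y), IsCode W ε cw D ∧ (∀ i, D i ⊆ A (cw i)) ∧
      (n ≤ N ∨ ∀ x, ∑' y : ↥(A x \ ⋃ i, D i), W x y ≤ 1 - ε) := by
  induction n with
  | zero =>
    exact ⟨0, Fin.elim0, Fin.elim0, ⟨fun i => i.elim0, fun i => i.elim0⟩, fun i => i.elim0,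
      .inl le_rfl⟩
  | succ n ih =>
    obtain ⟨N, cw, D, hcode, hA, hN⟩ := ih
    by_cases hsat : ∀ x, ∑' y : ↥(A x \ ⋃ i, D i), W x y ≤ 1 - ε
    · exact ⟨N, cw, D, hcode, hA, .inr hsat⟩
    obtain ⟨x, hx⟩ := not_forall.1 hsat
    refine ⟨N + 1, Fin.snoc cw x, Fin.snoc D (A x \ ⋃ i, D i),
      hcode.snoc (fun i => disjoint_sdiff_right.mono_left (subset_iUnion D i)) (not_le.1 hx),
      fun i => ?_, .inl (Nat.succ_le_succ (hN.resolve_right hsat))⟩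
    induction i using Fin.lastCases
    · simp
    · simpa using hA _

end Code

section Channel

variable {X Y : Type*} (W : X → Y → ℝ) (PX : X → ℝ)

noncomputable def outputDist (y : Y) : ℝ := ∑' x, PX x * W x y

noncomputable def infoDensity (x : X) (y : Y) : ℝ := log (W x y / outputDist W PX y)

def lowDensitySet (θ : ℝ) : Set (X × Y) := {p | W p.1 p.2 = 0 ∨ infoDensity W PX p.1 p.2 ≤ θ}

def highDensityOutputs (θ : ℝ) (x : X) : Set Y := {y | (x, y) ∉ lowDensitySet W PX θ}

variable {W PX}

lemma exp_mul_outputDist_le (hW0 : ∀ x y, 0 ≤ W x y) (hPX0 : ∀ x, 0 ≤ PX x) {θ : ℝ} {x : X}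
    {y : Y} (hy : y ∈ highDensityOutputs W PX θ x) : exp θ * outputDist W PX y ≤ W x y := by
  simp only [highDensityOutputs, lowDensitySet, mem_ofPred_eq, not_or, not_le] at hy
  exact exp_mul_le_of_lt_log_div ((hW0 x y).lt_of_ne' hy.1)
    (tsum_nonneg fun x => mul_nonneg (hPX0 x) (hW0 x y)) hy.2

lemma hasSum_joint (hW0 : ∀ x y, 0 ≤ W x y) (hW1 : ∀ x, HasSum (W x) 1)
    (hPX0 : ∀ x, 0 ≤ PX x) (hPX1 : HasSum PX 1) :
    HasSum (fun p : X × Y => PX p.1 * W p.1 p.2) 1 := by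
  have hrow (x : X) : ∑' y, PX x * W x y = PX x := by rw [tsum_mul_left, (hW1 x).tsum_eq, mul_one]
  have hf : Summable fun p : X × Y => PX p.1 * W p.1 p.2 := by
    refine (summable_prod_of_nonneg fun p => mul_nonneg (hPX0 _) (hW0 _ _)).2 ⟨fun x => ?_, ?_⟩
    · exact (hW1 x).summable.mul_left (PX x)
    · simpa only [hrow] using hPX1.summable
  rw [hf.hasSum_iff, hf.tsum_prod]
  simpa only [hrow] using hPX1.tsum_eq

lemma summable_outputDist (hW0 : ∀ x y, 0 ≤ W x y) (hW1 : ∀ x, HasSum (W x) 1)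
    (hPX0 : ∀ x, 0 ≤ PX x) (hPX1 : HasSum PX 1) : Summable (outputDist W PX) :=
  (hasSum_joint hW0 hW1 hPX0 hPX1).summable.prod_symm.prod

lemma summable_tsum_subtype_mul (hW0 : ∀ x y, 0 ≤ W x y) (hW1 : ∀ x, HasSum (W x) 1)
    (hPX0 : ∀ x, 0 ≤ PX x) (hPX : Summable PX) (s : X → Set Y) :
    Summable fun x => ∑' y : s x, PX x * W x y := by
  refine hPX.of_nonneg_of_le (fun x => tsum_nonneg fun y => mul_nonneg (hPX0 x) (hW0 x y))
    fun x => ?_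
  rw [tsum_mul_left]
  exact mul_le_of_le_one_right (hPX0 x) ((hW1 x).tsum_subtype_le (hW0 x) (s x))

lemma exp_mul_tsum_outputDist_le_one (hW0 : ∀ x y, 0 ≤ W x y) (hW1 : ∀ x, HasSum (W x) 1)
    (hPX0 : ∀ x, 0 ≤ PX x) (hPX1 : HasSum PX 1) {θ : ℝ} {x : X} {s : Set Y}
    (hs : s ⊆ highDensityOutputs W PX θ x) : exp θ * ∑' y : s, outputDist W PX y ≤ 1 :=
  calc exp θ * ∑' y : s, outputDist W PX y = ∑' y : s, exp θ * outputDist W PX y :=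
        tsum_mul_left.symm
    _ ≤ ∑' y : s, W x y :=
        (((summable_outputDist hW0 hW1 hPX0 hPX1).subtype s).mul_left _).tsum_le_tsum
          (fun y => exp_mul_outputDist_le hW0 hPX0 (hs y.2)) ((hW1 x).summable.subtype s)
    _ ≤ 1 := (hW1 x).tsum_subtype_le (hW0 x) s

lemma exp_mul_tsum_iUnion_outputDist_le (hW0 : ∀ x y, 0 ≤ W x y) (hW1 : ∀ x, HasSum (W x) 1)
    (hPX0 : ∀ x, 0 ≤ PX x) (hPX1 : HasSum PX 1) {θ : ℝ} {N : ℕ} {cw : Fin N → X}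
    {D : Fin N → Set Y} (hdisj : Pairwise (Disjoint on D))
    (hD : ∀ i, D i ⊆ highDensityOutputs W PX θ (cw i)) :
    exp θ * ∑' y : ⋃ i, D i, outputDist W PX y ≤ N := by
  have hPY := summable_outputDist hW0 hW1 hPX0 hPX1
  have hU : ⋃ i, D i = ⋃ i ∈ Finset.univ, D i := by simp
  rw [hU, Summable.tsum_finset_bUnion_disjoint (hdisj.set_pairwise _) fun i _ => hPY.subtype _,
    Finset.mul_sum]
  simpa using Finset.sum_le_card_nsmul Finset.univ _ 1 fun i _ =>
    exp_mul_tsum_outputDist_le_one hW0 hW1 hPX0 hPX1 (hD i)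

lemma tsum_compl_lowDensitySet_le (hW0 : ∀ x y, 0 ≤ W x y) (hW1 : ∀ x, HasSum (W x) 1)
    (hPX0 : ∀ x, 0 ≤ PX x) (hPX1 : HasSum PX 1) {θ ε : ℝ} {U : Set Y}
    (hU : ∀ x, ∑' y : ↥(highDensityOutputs W PX θ x \ U), W x y ≤ 1 - ε) :
    ∑' p : ↥(lowDensitySet W PX θ)ᶜ, PX p.1.1 * W p.1.1 p.1.2 ≤
      ∑' y : U, outputDist W PX y + (1 - ε) := by
  have hf := (hasSum_joint hW0 hW1 hPX0 hPX1).summable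
  have hfiber (x : X) : ∑' y : highDensityOutputs W PX θ x, PX x * W x y ≤
      ∑' y : U, PX x * W x y + PX x * (1 - ε) := by
    refine (((hW1 x).summable.mul_left (PX x)).tsum_subtype_le_add_tsum_subtype_diff
      (fun y => mul_nonneg (hPX0 x) (hW0 x y)) _ U).trans ?_
    gcongr
    exact tsum_mul_left.trans_le (mul_le_mul_of_nonneg_left (hU x) (hPX0 x))
  have hsU := summable_tsum_subtype_mul hW0 hW1 hPX0 hPX1.summable fun _ => U
  calc _ = ∑' x, ∑' y : highDensityOutputs W PX θ x, PX x * W x y := hf.tsum_subtype_prod _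
    _ ≤ ∑' x, (∑' y : U, PX x * W x y + PX x * (1 - ε)) :=
        (summable_tsum_subtype_mul hW0 hW1 hPX0 hPX1.summable _).tsum_le_tsum hfiber
          (hsU.add (hPX1.summable.mul_right _))
    _ = ∑' y : U, outputDist W PX y + (1 - ε) := by
        rw [hsU.tsum_add (hPX1.summable.mul_right _), tsum_mul_right, hPX1.tsum_eq, one_mul,
          Summable.tsum_tsum_subtype_comm (f := fun x y => PX x * W x y) hf U]
        rfl

lemma sub_tsum_lowDensitySet_le (hW0 : ∀ x y, 0 ≤ W x y) (hW1 : ∀ x, HasSum (W x) 1)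
    (hPX0 : ∀ x, 0 ≤ PX x) (hPX1 : HasSum PX 1) {θ ε : ℝ} {U : Set Y}
    (hU : ∀ x, ∑' y : ↥(highDensityOutputs W PX θ x \ U), W x y ≤ 1 - ε) :
    ε - ∑' p : lowDensitySet W PX θ, PX p.1.1 * W p.1.1 p.1.2 ≤ ∑' y : U, outputDist W PX y := by
  have hf := hasSum_joint hW0 hW1 hPX0 hPX1
  have hsplit := hf.summable.tsum_subtype_add_tsum_subtype_compl (lowDensitySet W PX θ)
  linarith [hf.tsum_eq, tsum_compl_lowDensitySet_le hW0 hW1 hPX0 hPX1 hU]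

end Channel

theorem feinstein_lemma_general {X Y : Type}
    (W : X → Y → ℝ) (PX : X → ℝ)
    (hW0 : ∀ x y, 0 ≤ W x y) (hW1 : ∀ x, HasSum (W x) 1)
    (hPX0 : ∀ x, 0 ≤ PX x) (hPX1 : HasSum PX 1)
    (θ ε : ℝ) :
    ∃ (N : ℕ) (cw : Fin N → X) (D : Fin N → Set Y),
      (∀ i j : Fin N, i ≠ j → Disjoint (D i) (D j)) ∧
      (∀ i : Fin N, 1 - ε < ∑' y : (D i), W (cw i) y.val) ∧
      Real.exp θ *
          (ε - ∑' p : {p : X × Y //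
              W p.1 p.2 = 0 ∨
                Real.log (W p.1 p.2 / ∑' x : X, PX x * W x p.2) ≤ θ},
            PX p.val.1 * W p.val.1 p.val.2) ≤ (N : ℝ) := by
  obtain ⟨N, cw, D, hcode, hD, hN⟩ :=
    exists_isCode_le_or_saturated W ε (highDensityOutputs W PX θ) ⌈exp θ * ε⌉₊
  refine ⟨N, cw, D, hcode.disjoint, hcode.lt_tsum, ?_⟩
  rcases hN with hlarge | hsat
  · calc _ ≤ exp θ * ε := by
          gcongr
          exact sub_le_self _ (tsum_nonneg fun p => mul_nonneg (hPX0 _) (hW0 _ _))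
      _ ≤ N := (Nat.le_ceil _).trans (Nat.cast_le.2 hlarge)
  · calc _ ≤ exp θ * ∑' y : ⋃ i, D i, outputDist W PX y := by
          gcongr
          exact sub_tsum_lowDensitySet_le hW0 hW1 hPX0 hPX1 hsat
      _ ≤ N := exp_mul_tsum_iUnion_outputDist_le hW0 hW1 hPX0 hPX1 hcode.disjoint hD

/-- Feinstein's lemma: for a channel `W` from a countable `X` to a
countable `Y` with input distribution `P_X`, output distribution
`P_Y(y) = ∑_x P_X(x) W(y|x)` and information density `i(x,y) = log(W(y|x)/P_Y(y))`
(pairs with `W(y|x) = 0` counted as `i(x,y) ≤ θ`), for every `θ ∈ ℝ` and `0 < ε < 1`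
the maximal size `N(ε)` of an ε-code satisfies `N(ε) ≥ e^θ (ε - P[i(X,Y) ≤ θ])`;
the bound is witnessed by an actual ε-code of size `N`. -/
theorem feinstein_lemma {X Y : Type} [Countable X] [Countable Y]
    (W : X → Y → ℝ) (PX : X → ℝ)
    (hW0 : ∀ x y, 0 ≤ W x y) (hW1 : ∀ x, HasSum (W x) 1)
    (hPX0 : ∀ x, 0 ≤ PX x) (hPX1 : HasSum PX 1)
    (θ ε : ℝ) (hε0 : 0 < ε) (hε1 : ε < 1) :
    ∃ (N : ℕ) (cw : Fin N → X) (D : Fin N → Set Y),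
      (∀ i j : Fin N, i ≠ j → Disjoint (D i) (D j)) ∧
      (∀ i : Fin N, 1 - ε < ∑' y : (D i), W (cw i) y.val) ∧
      Real.exp θ *
          (ε - ∑' p : {p : X × Y //
              W p.1 p.2 = 0 ∨
                Real.log (W p.1 p.2 / ∑' x : X, PX x * W x p.2) ≤ θ},
            PX p.val.1 * W p.val.1 p.val.2) ≤ (N : ℝ) :=
  feinstein_lemma_general W PX hW0 hW1 hPX0 hPX1 θ ε
end

section
/- (Lyapunov drift condition / Foster's criterion for the joint chain.) Let V(ỹ,q) = (q − ỹ)/(μ − λ) on 𝕏. Then for every state ψ = (ỹ,q) ∈ 𝕏 with q > 1, the one-step drift satisfies ∑_{ψ'∈𝕏} P(ψ,ψ')·V(ψ') − V(ψ) = −1; moreover there exists b < ∞ such that for every ψ = (ỹ,q) ∈ 𝕏, ∑_{ψ'∈𝕏} P(ψ,ψ')·V(ψ') − V(ψ) ≤ −1 + b·1[q ≤ 1]. -/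
open scoped BigOperators

/-!
Write a state as `(ỹ, a + ỹ)`, where `a = q - ỹ` is the queue left behind by the departure.
The kernel depends on the state only through `a`, and `V = a / (μ - λ)`. The next state has
`q' = a + x̃` and, when `q' ≥ 1`, `ỹ' ~ Bernoulli(μ)`; so the drift is `𝔼[x̃ - ỹ'] / (μ - λ)`,
which is `(λ - μ)/(μ - λ) = -1` when `a ≥ 1` and `λμ̄/(μ - λ)` when `a = 0` (forcing `q ≤ 1`).
-/

noncomputable def drift (lam mu : ℝ) (ψ : Bool × ℕ) : ℝ :=
  (∑' ψ' : XS, kerP lam mu ψ ψ'.val * Vlya lam mu ψ'.val) - Vlya lam mu ψ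

theorem kerP_eq_zero_of_ne (lam mu : ℝ) (y b : Bool) {a q : ℕ} (h₀ : q ≠ a) (h₁ : q ≠ a + 1) :
    kerP lam mu (y, a + if y then 1 else 0) (b, q) = 0 := by
  have hx : (q : ℤ) - ↑(a + if y then 1 else 0) + (if y then 1 else 0) = q - a := by
    push_cast; ring
  rw [kerP]
  dsimp only
  rw [hx, if_neg (by omega), if_neg (by omega), zero_mul]

theorem tsum_kerP_mul_eq_sum (lam mu : ℝ) (y : Bool) (a : ℕ) (g : Bool × ℕ → ℝ) :
    ∑' ψ' : XS, kerP lam mu (y, a + if y then 1 else 0) ψ'.val * g ψ'.val =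
      ∑ b : Bool, ∑ q ∈ {a, a + 1}, kerP lam mu (y, a + if y then 1 else 0) (b, q) * g (b, q) := by
  set f := fun ψ' => kerP lam mu (y, a + if y then 1 else 0) ψ' * g ψ'
  have hXS : Function.support f ⊆ {p | p.1 = true → 1 ≤ p.2} := by
    rintro ⟨b, q⟩ h
    contrapose! h
    cases b <;> simp_all [f, kerP]
  refine (tsum_subtype_eq_of_support_subset hXS).trans ?_
  rw [tsum_eq_sum (s := Finset.univ ×ˢ {a, a + 1}), Finset.sum_product]
  rintro ⟨b, q⟩ h
  simp only [Finset.mem_product, Finset.mem_univ, true_and, Finset.mem_insert,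
    Finset.mem_singleton, not_or] at h
  simp only [f, kerP_eq_zero_of_ne lam mu y b h.1 h.2, zero_mul]

theorem drift_eq (lam mu : ℝ) (y : Bool) (a : ℕ) :
    drift lam mu (y, a + if y then 1 else 0) =
      (lam - if a = 0 then lam * mu else mu) / (mu - lam) := by
  rw [drift, tsum_kerP_mul_eq_sum, Fintype.sum_bool, Finset.sum_pair (by omega),
    Finset.sum_pair (by omega)]
  rcases a with _ | a <;> cases y <;> simp [kerP, Vlya] <;> ring

theorem drift_eq_neg_one {lam mu : ℝ} (hlm : lam ≠ mu) (y : Bool) {a : ℕ} (ha : a ≠ 0) :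
    drift lam mu (y, a + if y then 1 else 0) = -1 := by
  rw [drift_eq, if_neg ha, ← neg_sub, neg_div, div_self (sub_ne_zero.2 hlm.symm)]

theorem drift_eq_of_queue_empty (lam mu : ℝ) (y : Bool) :
    drift lam mu (y, 0 + if y then 1 else 0) = lam * (1 - mu) / (mu - lam) := by
  rw [drift_eq, if_pos rfl, mul_one_sub]

theorem exists_eq_add_of_mem_XS {y : Bool} {q : ℕ} (h : y = true → 1 ≤ q) :
    ∃ a : ℕ, q = a + if y then 1 else 0 :=
  ⟨q - if y then 1 else 0, by cases y <;> simp_all⟩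

theorem foster_criterion_general (lam mu : ℝ) (h1 : lam < mu) :
    (∀ ψ : XS, 1 < ψ.val.2 →
      (∑' ψ' : XS, kerP lam mu ψ.val ψ'.val * Vlya lam mu ψ'.val) - Vlya lam mu ψ.val = -1) ∧
    ∃ b : ℝ, ∀ ψ : XS,
      (∑' ψ' : XS, kerP lam mu ψ.val ψ'.val * Vlya lam mu ψ'.val) - Vlya lam mu ψ.val ≤
        -1 + b * (if ψ.val.2 ≤ 1 then 1 else 0) := by
  refine ⟨fun ψ hq => ?_, 1 + |lam * (1 - mu) / (mu - lam)|, fun ψ => ?_⟩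
  all_goals
    obtain ⟨⟨y, q⟩, hy⟩ := ψ
    obtain ⟨a, rfl⟩ := exists_eq_add_of_mem_XS (y := y) (q := q) hy
  · exact drift_eq_neg_one h1.ne y (by cases y <;> simp_all <;> omega)
  · change drift lam mu _ ≤ _
    rcases eq_or_ne a 0 with rfl | ha
    · rw [drift_eq_of_queue_empty, if_pos (by cases y <;> simp)]
      linarith [le_abs_self (lam * (1 - mu) / (mu - lam))]
    · rw [drift_eq_neg_one h1.ne y ha]
      exact le_add_of_nonneg_right (by positivity)

/-- Lyapunov drift condition / Foster's criterion: for
`V(ỹ,q) = (q - ỹ)/(μ - λ)`, the drift `∑_{ψ'∈𝕏} P(ψ,ψ') V(ψ') - V(ψ)` equals `-1`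
whenever `q > 1`, and is `≤ -1 + b·1[q ≤ 1]` everywhere on `𝕏` for some `b < ∞`. -/
theorem foster_criterion (lam mu : ℝ) (h0 : 0 < lam) (h1 : lam < mu) (h2 : mu < 1) :
    (∀ ψ : XS, 1 < ψ.val.2 →
      (∑' ψ' : XS, kerP lam mu ψ.val ψ'.val * Vlya lam mu ψ'.val) - Vlya lam mu ψ.val = -1) ∧
    ∃ b : ℝ, ∀ ψ : XS,
      (∑' ψ' : XS, kerP lam mu ψ.val ψ'.val * Vlya lam mu ψ'.val) - Vlya lam mu ψ.val ≤
        -1 + b * (if ψ.val.2 ≤ 1 then 1 else 0) :=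
  foster_criterion_general lam mu h1
end

section
/- For every q ≥ 0, the partial stationary sum M(q,0) = ∑_{(ỹ',q')∈𝕏, q' ≤ q} (C − f(ỹ',q'))·π_Ψ(ỹ',q') has the closed form M(q,0) = c_{M0}·ρ^{q+1}, where c_{M0} = (λ̄/μ̄)·(μ·log(μ/λ) + μ̄·log(μ̄/λ̄) − C). -/
open scoped BigOperators

/-!
`M(0,0)` is the single term at `(0,0)`, and raising `q` by one adds the two states at level
`q + 1`, whose joint contribution is `π_Q(q+1) (C - μ log(μ/λ) - μ̄ log(μ̄/λ̄))`; since
`(λ̄/μ̄)(ρ - 1) = -(λ̄μ - λμ̄)/(μμ̄)`, this is exactly `c_{M0} (ρ^{q+2} - ρ^{q+1})`, so the sum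
telescopes. The base case `M(0,0) = c_{M0} ρ` is the entropy identity
`μ C = λ (μ log(μ/λ) + μ̄ log(μ̄/λ̄)) + (μ - λ) log(1/λ̄)`.
-/

section

variable (lam mu : ℝ)

noncomputable def stationaryTerm (p : Bool × ℕ) : ℝ :=
  (Cap lam mu - fInfo lam mu p) * piPsi lam mu p

def statesUpTo (q : ℕ) : Finset (Bool × ℕ) :=
  (Finset.univ ×ˢ Finset.range (q + 1)).filter (fun p => p.1 = true → 1 ≤ p.2)

theorem mem_statesUpTo (q : ℕ) (p : Bool × ℕ) :
    p ∈ statesUpTo q ↔ (p.1 = true → 1 ≤ p.2) ∧ p.2 ≤ q := by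
  simp [statesUpTo, and_comm]

theorem statesUpTo_zero : statesUpTo 0 = {(false, 0)} := by decide

theorem statesUpTo_succ (q : ℕ) :
    statesUpTo (q + 1) = insert (false, q + 1) (insert (true, q + 1) (statesUpTo q)) := by
  ext ⟨b, n⟩
  simp only [mem_statesUpTo, Finset.mem_insert]
  cases b <;> simp <;> omega

theorem M0_eq_sum_statesUpTo (q : ℕ) :
    M0 lam mu q = ∑ p ∈ statesUpTo q, stationaryTerm lam mu p := by
  have := Fintype.subtype (statesUpTo q) (mem_statesUpTo q)
  rw [M0, tsum_fintype]
  exact (Finset.sum_subtype (statesUpTo q) (mem_statesUpTo q) (stationaryTerm lam mu)).symm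

theorem M0_zero : M0 lam mu 0 = stationaryTerm lam mu (false, 0) := by
  rw [M0_eq_sum_statesUpTo, statesUpTo_zero, Finset.sum_singleton]

theorem M0_succ (q : ℕ) :
    M0 lam mu (q + 1) =
      M0 lam mu q + stationaryTerm lam mu (false, q + 1) + stationaryTerm lam mu (true, q + 1) := by
  have hfalse : (false, q + 1) ∉ insert (true, q + 1) (statesUpTo q) := by
    simp [mem_statesUpTo]
  have htrue : (true, q + 1) ∉ statesUpTo q := by
    simp [mem_statesUpTo]
  rw [M0_eq_sum_statesUpTo, statesUpTo_succ, Finset.sum_insert hfalse, Finset.sum_insert htrue,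
    ← M0_eq_sum_statesUpTo]
  ring

variable {lam mu}

theorem mul_Cap_eq (hl : lam ≠ 0) (hl1 : 1 - lam ≠ 0) (hm : mu ≠ 0) (hm1 : 1 - mu ≠ 0) :
    mu * Cap lam mu =
      lam * (mu * Real.log (mu / lam) + (1 - mu) * Real.log ((1 - mu) / (1 - lam))) +
        (mu - lam) * Real.log (1 / (1 - lam)) := by
  rw [Cap, Hbin, Hbin, Real.log_div hm hl, Real.log_div hm1 hl1, one_div, Real.log_inv]
  field_simp
  ring

theorem stationaryTerm_false_zero (hl : lam ≠ 0) (hl1 : 1 - lam ≠ 0) (hm : mu ≠ 0)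
    (hm1 : 1 - mu ≠ 0) : stationaryTerm lam mu (false, 0) = cM0 lam mu * rho lam mu := by
  have hCap := mul_Cap_eq hl hl1 hm hm1
  simp only [stationaryTerm, fInfo, piPsi, piQ, if_pos, cM0, rho]
  field_simp
  linear_combination hCap

theorem stationaryTerm_false_add_true (hl1 : 1 - lam ≠ 0) (hm : mu ≠ 0) (hm1 : 1 - mu ≠ 0)
    (q : ℕ) :
    stationaryTerm lam mu (false, q + 1) + stationaryTerm lam mu (true, q + 1) =
      cM0 lam mu * rho lam mu ^ (q + 2) - cM0 lam mu * rho lam mu ^ (q + 1) := by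
  simp only [stationaryTerm, fInfo, piPsi, piQ, if_neg (Nat.succ_ne_zero q), cM0, rho]
  rw [pow_succ _ (q + 1)]
  field_simp
  ring

end

/-- for every `q ≥ 0`, the partial stationary sum
`M(q,0) = ∑_{(ỹ',q')∈𝕏, q' ≤ q} (C - f(ỹ',q')) π_Ψ(ỹ',q')` equals `c_{M0} ρ^{q+1}`. -/
theorem M0_closed_form (lam mu : ℝ) (h0 : 0 < lam) (h1 : lam < mu) (h2 : mu < 1) :
    ∀ q : ℕ, M0 lam mu q = cM0 lam mu * rho lam mu ^ (q + 1) := by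
  have hl : lam ≠ 0 := h0.ne'
  have hl1 : 1 - lam ≠ 0 := by linarith
  have hm : mu ≠ 0 := by linarith
  have hm1 : 1 - mu ≠ 0 := by linarith
  intro q
  induction q with
  | zero => rw [M0_zero, stationaryTerm_false_zero hl hl1 hm hm1, pow_one]
  | succ q ih =>
    rw [M0_succ, ih, add_assoc, stationaryTerm_false_add_true hl1 hm hm1]
    ring
end

section
/- For every q ≥ 0, the partial stationary sum M(q+1,1) = ∑_{(ỹ',q')∈𝕏 : q' < q+1, or (q' = q+1 and ỹ' = 1)} (C − f(ỹ',q'))·π_Ψ(ỹ',q') has the closed form M(q+1,1) = ρ^{q+1}·(c_{M0} + (C − log(μ/λ))·π_Q(0)·μ/μ̄) = μ·c_{M̃}·ρ^{q+1}, where c_{M0} = (λ̄/μ̄)·(μ·log(μ/λ) + μ̄·log(μ̄/λ̄) − C) and c_{M̃} = c_{M0}/μ + (C − log(μ/λ))·π_Q(0)/μ̄. -/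
open scoped BigOperators

private lemma M1_eq_sum_aux (lam mu : ℝ) (q : ℕ) :
    M1 lam mu q =
      ∑ j ∈ Finset.range q, (Cap lam mu - fInfo lam mu (false, j)) * piPsi lam mu (false, j) +
      ∑ j ∈ Finset.range q, (Cap lam mu - fInfo lam mu (true, j+1)) * piPsi lam mu (true, j+1) := by
  classical
  set g : Bool × ℕ → ℝ := fun p => (Cap lam mu - fInfo lam mu p) * piPsi lam mu p with hg
  set T := {p : Bool × ℕ // (p.1 = true → 1 ≤ p.2) ∧ (p.2 < q ∨ (p.2 = q ∧ p.1 = true))}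
  let e : Fin q ⊕ Fin q → T := Sum.elim
    (fun j => ⟨(false, j), by simp, Or.inl j.2⟩)
    (fun j => ⟨(true, j+1), fun _ => Nat.succ_le_succ (Nat.zero_le _), by
      rcases Nat.lt_or_ge (j.val+1) q with h|h
      · exact Or.inl h
      · exact Or.inr ⟨by omega, rfl⟩⟩)
  have hbij : Function.Bijective e := by
    constructor
    · rintro (a|a) (b|b) h
      all_goals
        have h' := congrArg (fun t : T => t.1) h
        simp only [e, Sum.elim_inl, Sum.elim_inr, Prod.mk.injEq] at h'
      all_goals first
        | exact congrArg Sum.inl (Fin.ext h'.2)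
        | exact congrArg Sum.inr (Fin.ext (by omega))
        | exact absurd h'.1 (by simp)
    · rintro ⟨⟨b, n⟩, hb, hlt⟩
      cases b with
      | false =>
        have hn : n < q := by
          rcases hlt with h | h
          · exact h
          · exact absurd h.2 (by simp)
        exact ⟨Sum.inl ⟨n, hn⟩, rfl⟩
      | true =>
        have h1 : 1 ≤ n := hb rfl
        have h2 : n - 1 < q := by rcases hlt with h | h <;> omega
        refine ⟨Sum.inr ⟨n - 1, h2⟩, Subtype.ext ?_⟩
        simp only [e, Sum.elim_inr]
        have hnn : n - 1 + 1 = n := by omega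
        rw [hnn]
  have key := (Equiv.ofBijective e hbij).tsum_eq (fun p : T => g p.val)
  have hM : M1 lam mu q = ∑' a : Fin q ⊕ Fin q, g (e a).val := by
    rw [M1]
    rw [← key]
    rfl
  rw [hM, tsum_fintype, Fintype.sum_sum_type]
  congr 1
  · simp only [e, Sum.elim_inl]
    exact Fin.sum_univ_eq_sum_range (fun j => g (false, j)) q
  · simp only [e, Sum.elim_inr]
    exact Fin.sum_univ_eq_sum_range (fun j => g (true, j+1)) q

/-- for every `q ≥ 0`, the partial stationary sum `M(q+1,1)` equals
`ρ^{q+1}(c_{M0} + (C - log(μ/λ)) π_Q(0) μ/μ̄)`, which is `μ c_{M̃} ρ^{q+1}`. -/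
theorem M1_closed_form (lam mu : ℝ) (h0 : 0 < lam) (h1 : lam < mu) (h2 : mu < 1) :
    ∀ q : ℕ,
      M1 lam mu (q + 1) =
        rho lam mu ^ (q + 1) *
          (cM0 lam mu +
            (Cap lam mu - Real.log (mu / lam)) * piQ lam mu 0 * mu / (1 - mu)) ∧
      M1 lam mu (q + 1) = mu * cMt lam mu * rho lam mu ^ (q + 1) := by
  have hl1 : lam < 1 := h1.trans h2
  have hlb : (0:ℝ) < 1 - lam := by linarith
  have hmb : (0:ℝ) < 1 - mu := by linarith
  have hm0 : (0:ℝ) < mu := h0.trans h1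
  have hlam : lam ≠ 0 := ne_of_gt h0
  have hmu : mu ≠ 0 := ne_of_gt hm0
  have hlb' : (1:ℝ) - lam ≠ 0 := ne_of_gt hlb
  have hmb' : (1:ℝ) - mu ≠ 0 := ne_of_gt hmb
  have hlog1 : Real.log (1 / (1 - lam)) = -Real.log (1 - lam) := by
    rw [one_div, Real.log_inv]
  have hlog2 : Real.log ((1 - mu) / (1 - lam)) = Real.log (1 - mu) - Real.log (1 - lam) :=
    Real.log_div hmb' hlb'
  have hlog3 : Real.log (mu / lam) = Real.log mu - Real.log lam := Real.log_div hmu hlam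
  set A : ℝ := cM0 lam mu +
      (Cap lam mu - Real.log (mu / lam)) * piQ lam mu 0 * mu / (1 - mu) with hA
  have hAmu : A = mu * cMt lam mu := by
    rw [hA, cMt, piQ]
    field_simp
  have hkey : rho lam mu * A =
      A + (Cap lam mu - Real.log ((1 - mu) / (1 - lam))) * ((1 - mu) *
            (((1 - lam) * mu - lam * (1 - mu)) / (mu * (1 - mu)))) +
          (Cap lam mu - Real.log (mu / lam)) * (mu *
            (((1 - lam) * mu - lam * (1 - mu)) / (mu * (1 - mu)))) * rho lam mu := by
    rw [hA]
    simp only [cM0, Cap, Hbin, rho, piQ]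
    norm_num
    rw [hlog2, hlog3]
    field_simp
    ring
  have main : ∀ q : ℕ, M1 lam mu (q + 1) = rho lam mu ^ (q + 1) * A := by
    intro q
    induction q with
    | zero =>
      rw [M1_eq_sum_aux]
      simp only [Finset.sum_range_succ, Finset.sum_range_zero, zero_add, pow_one]
      show (Cap lam mu - fInfo lam mu (false, 0)) * piPsi lam mu (false, 0) +
          (Cap lam mu - fInfo lam mu (true, 0 + 1)) * piPsi lam mu (true, 0 + 1) = _
      rw [show piPsi lam mu (false, 0) = piQ lam mu 0 from rfl,
        show piPsi lam mu (true, 0 + 1) = mu * piQ lam mu (0 + 1) from rfl,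
        show fInfo lam mu (false, 0) = Real.log (1 / (1 - lam)) from rfl,
        show fInfo lam mu (true, 0 + 1) = Real.log (mu / lam) from rfl]
      rw [hA]
      simp only [cM0, Cap, Hbin, rho, piQ]
      norm_num
      rw [hlog2, hlog3]
      field_simp
      ring
    | succ n ih =>
      rw [M1_eq_sum_aux] at ih ⊢
      rw [Finset.sum_range_succ
            (fun j => (Cap lam mu - fInfo lam mu (false, j)) * piPsi lam mu (false, j)) (n+1),
          Finset.sum_range_succ
            (fun j => (Cap lam mu - fInfo lam mu (true, j+1)) * piPsi lam mu (true, j+1)) (n+1)]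
      have h1' : (Cap lam mu - fInfo lam mu (false, n + 1)) * piPsi lam mu (false, n + 1) =
          (Cap lam mu - Real.log ((1 - mu) / (1 - lam))) * ((1 - mu) *
            ((((1 - lam) * mu - lam * (1 - mu)) / (mu * (1 - mu))) * rho lam mu ^ (n + 1))) := by
        rw [show fInfo lam mu (false, n + 1) = Real.log ((1 - mu) / (1 - lam)) from rfl,
          show piPsi lam mu (false, n + 1) = (1 - mu) * piQ lam mu (n + 1) from rfl, piQ]
        simp
      have h2' : (Cap lam mu - fInfo lam mu (true, n + 1 + 1)) * piPsi lam mu (true, n + 1 + 1) =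
          (Cap lam mu - Real.log (mu / lam)) * (mu *
            ((((1 - lam) * mu - lam * (1 - mu)) / (mu * (1 - mu))) * rho lam mu ^ (n + 2))) := by
        rw [show fInfo lam mu (true, n + 1 + 1) = Real.log (mu / lam) from rfl,
          show piPsi lam mu (true, n + 1 + 1) = mu * piQ lam mu (n + 2) from rfl, piQ]
        simp
      rw [h1', h2']
      have hpow : rho lam mu ^ (n + 2) = rho lam mu ^ (n + 1) * rho lam mu := by ring
      rw [hpow]
      linear_combination ih - rho lam mu ^ (n + 1) * hkey
  intro q
  refine ⟨main q, ?_⟩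
  rw [main q, ← hAmu]
  ring
end
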